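/- arXiv:2002.09486 — 3 statements merged into one kernel-verified Lean document; each statement's English description precedes it below -/
import Mathlib

section
/- Let q ≥ 1 and let f, g : ℂ × ℤ^q → ℂ satisfy g(s; -l_1,…,-l_q) = ∑ over all decompositions i_b + j_b = l_b with i_b, j_b ≥ 0 (for 1 ≤ b ≤ q) of (∏_{a=1}^q C(l_a, i_a)) · f(s - i_1 - ⋯ - i_q; -j_1,…,-j_q), for all s ∈ ℂ and all l_1,…,l_q ∈ ℕ₀. Then f(s; -l_1,…,-l_q) = ∑ over the same index set of (∏_{a=1}^q (-1)^{i_a} C(l_a, i_a)) · g(s - i_1 - ⋯ - i_q; -j_1,…,-j_q) for all s ∈ ℂ and l_1,…,l_q ∈ ℕ₀. -/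
/-!
Substituting the hypothesis into the right-hand side and collecting the terms with `i + j = k`,
the coefficient of `f (·, -(l - k))` factors over the coordinates, and by
`C(l, i) C(l - i, k - i) = C(l, k) C(k, i)` it equals `C(l, k) ∏ₐ ∑ᵢ (-1)^i C(kₐ, i)`,
which vanishes unless `k = 0`.
-/

open Finset

lemma sum_natCast_tsub {ι R : Type*} [Fintype ι] [AddCommGroupWithOne R] {l i : ι → ℕ}
    (hi : i ≤ l) :
    ∑ a, (((l - i) a : ℕ) : R) = ∑ a, (l a : R) - ∑ a, (i a : R) := by
  rw [← sum_sub_distrib]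
  exact sum_congr rfl fun a _ => Nat.cast_sub (hi a)

section BinomialInversion

variable {ι R : Type*} [Fintype ι] [DecidableEq ι] [CommRing R]

lemma sum_Iic_neg_one_pow_mul_choose_mul_choose (n k : ℕ) :
    ∑ i ∈ Iic k, (-1 : R) ^ i * (n.choose i : R) * ((n - i).choose (k - i) : R) =
      if k = 0 then 1 else 0 := by
  have alternating : ∑ i ∈ range (k + 1), (-1 : R) ^ i * (k.choose i : R) =
      if k = 0 then 1 else 0 := by
    exact_mod_cast congrArg (Int.cast : ℤ → R) (Int.alternating_sum_range_choose (n := k))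
  calc ∑ i ∈ Iic k, (-1 : R) ^ i * (n.choose i : R) * ((n - i).choose (k - i) : R)
      = (n.choose k : R) * ∑ i ∈ range (k + 1), (-1 : R) ^ i * (k.choose i : R) := by
        rw [mul_sum, ← Nat.Iio_eq_range, Iio_add_one_eq_Iic]
        refine sum_congr rfl fun i hi => ?_
        rw [mul_left_comm, mul_assoc, ← Nat.cast_mul, ← Nat.choose_mul (mem_Iic.mp hi),
          Nat.cast_mul]
    _ = if k = 0 then 1 else 0 := by rw [alternating]; split_ifs with h <;> simp [h]

lemma sum_Iic_prod_neg_one_pow_mul_choose_mul_choose (l k : ι → ℕ) :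
    ∑ i ∈ Iic k, ∏ a, (-1 : R) ^ i a * ((l a).choose (i a) : R) *
        ((l a - i a).choose (k a - i a) : R) =
      if k = 0 then 1 else 0 := by
  rw [show Iic k = Fintype.piFinset fun a => Iic (k a) from rfl,
    ← prod_univ_sum (fun a => Iic (k a)) fun a i =>
      (-1 : R) ^ i * ((l a).choose i : R) * ((l a - i).choose (k a - i) : R),
    prod_congr rfl fun a _ => sum_Iic_neg_one_pow_mul_choose_mul_choose _ _, Fintype.prod_boole]
  exact if_congr funext_iff.symm rfl rfl

lemma map_addLeftEmbedding_Iic_tsub {i l : ι → ℕ} (hi : i ≤ l) :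
    (Iic (l - i)).map (addLeftEmbedding i) = Icc i l := by
  ext k
  simp only [mem_map, mem_Iic, mem_Icc, addLeftEmbedding_apply]
  constructor
  · rintro ⟨j, hj, rfl⟩
    exact ⟨le_self_add, (add_le_add le_rfl hj).trans (add_tsub_cancel_of_le hi).le⟩
  · rintro ⟨hik, hkl⟩
    exact ⟨k - i, tsub_le_tsub_right hkl i, add_tsub_cancel_of_le hik⟩

theorem pi_binomial_inversion (φ ψ : (ι → ℕ) → R)
    (h : ∀ l, ψ l = ∑ i ∈ Iic l, (∏ a, ((l a).choose (i a) : R)) * φ (l - i))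
    (l : ι → ℕ) :
    φ l = ∑ i ∈ Iic l, (∏ a, (-1 : R) ^ i a * ((l a).choose (i a) : R)) * ψ (l - i) := by
  symm
  calc ∑ i ∈ Iic l, (∏ a, (-1 : R) ^ i a * ((l a).choose (i a) : R)) * ψ (l - i)
      = ∑ i ∈ Iic l, ∑ k ∈ Icc i l, (∏ a, (-1 : R) ^ i a * ((l a).choose (i a) : R) *
          ((l a - i a).choose (k a - i a) : R)) * φ (l - k) := by
        refine sum_congr rfl fun i hi => ?_
        rw [h, mul_sum, ← map_addLeftEmbedding_Iic_tsub (mem_Iic.mp hi), sum_map]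
        refine sum_congr rfl fun j _ => ?_
        simp only [addLeftEmbedding_apply, prod_mul_distrib, tsub_tsub, Pi.sub_apply,
          Pi.add_apply, add_tsub_cancel_left]
        ring
    _ = ∑ k ∈ Iic l, ∑ i ∈ Iic k, (∏ a, (-1 : R) ^ i a * ((l a).choose (i a) : R) *
          ((l a - i a).choose (k a - i a) : R)) * φ (l - k) :=
        sum_comm' fun i k => by
          simp only [mem_Iic, mem_Icc]
          exact ⟨fun ⟨_, hik, hkl⟩ => ⟨hik, hkl⟩,
            fun ⟨hik, hkl⟩ => ⟨hik.trans hkl, hik, hkl⟩⟩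
    _ = ∑ k ∈ Iic l, if k = 0 then φ (l - k) else 0 := by
        refine sum_congr rfl fun k _ => ?_
        rw [← sum_mul, sum_Iic_prod_neg_one_pow_mul_choose_mul_choose, ite_mul,
          one_mul, zero_mul]
    _ = φ l := by simp

end BinomialInversion

theorem stmt_2_general (q : ℕ) (f g : ℂ × (Fin q → ℤ) → ℂ)
    (h : ∀ (s : ℂ) (l : Fin q → ℕ), g (s, fun b => -(l b : ℤ)) =
      ∑ i ∈ Finset.Iic l,
        (∏ a, ((l a).choose (i a) : ℂ)) *
          f (s - ∑ a, (i a : ℂ), fun b => -((l b - i b : ℕ) : ℤ))) :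
    ∀ (s : ℂ) (l : Fin q → ℕ), f (s, fun b => -(l b : ℤ)) =
      ∑ i ∈ Finset.Iic l,
        (∏ a, (-1 : ℂ) ^ (i a) * ((l a).choose (i a) : ℂ)) *
          g (s - ∑ a, (i a : ℂ), fun b => -((l b - i b : ℕ) : ℤ)) := by
  intro s l
  -- The first argument minus the sum of the second is the same on both sides of `h`.
  set σ := s - ∑ a, (l a : ℂ)
  have shift {k i : Fin q → ℕ} (hi : i ∈ Iic k) :
      σ + ∑ a, (k a : ℂ) - ∑ a, (i a : ℂ) = σ + ∑ a, ((k - i) a : ℂ) := by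
    rw [sum_natCast_tsub (mem_Iic.mp hi), add_sub_assoc]
  have inversion := pi_binomial_inversion
    (fun k => f (σ + ∑ a, (k a : ℂ), fun b => -(k b : ℤ)))
    (fun k => g (σ + ∑ a, (k a : ℂ), fun b => -(k b : ℤ)))
    (fun k => (h _ k).trans (sum_congr rfl fun i hi => by rw [shift hi]; rfl)) l
  simp only [σ, sub_add_cancel] at inversion
  rw [inversion]
  refine sum_congr rfl fun i hi => ?_
  rw [← shift hi]
  simp only [σ, sub_add_cancel]
  rfl

theorem stmt_2 (q : ℕ) (hq : 1 ≤ q) (f g : ℂ × (Fin q → ℤ) → ℂ)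
    (h : ∀ (s : ℂ) (l : Fin q → ℕ), g (s, fun b => -(l b : ℤ)) =
      ∑ i ∈ Finset.Iic l,
        (∏ a, ((l a).choose (i a) : ℂ)) *
          f (s - ∑ a, (i a : ℂ), fun b => -((l b - i b : ℕ) : ℤ))) :
    ∀ (s : ℂ) (l : Fin q → ℕ), f (s, fun b => -(l b : ℤ)) =
      ∑ i ∈ Finset.Iic l,
        (∏ a, (-1 : ℂ) ^ (i a) * ((l a).choose (i a) : ℂ)) *
          g (s - ∑ a, (i a : ℂ), fun b => -((l b - i b : ℕ) : ℤ)) :=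
  stmt_2_general q f g h
end

section
/- In the multivariate formal power series ring ℚ[[t_1,…,t_r]], the product ∏_{i=1}^r ((1 − t_i − ⋯ − t_r)·e^{t_i+⋯+t_r} − 1)/((e^{t_i+⋯+t_r} − 1)²) is a well-defined formal power series (i.e., each factor ((1 − y)e^y − 1)/((e^y − 1)²) is a formal power series in y with constant term −1/2 after substituting y = t_i + ⋯ + t_r), and its coefficient of t_1^{k_1}⋯t_r^{k_r} multiplied by (−1)^{k_1+⋯+k_r} k_1!⋯k_r! equals (−1)^{k_1+⋯+k_r} ∑ over ν_{ij} ≥ 0 with ν_{1i}+⋯+ν_{ii} = k_i (1 ≤ i ≤ r) of ∏_{i=1}^r (k_i!/∏_{j=i}^r ν_{ij}!) · B_{ν_{ii}+⋯+ν_{ir}+1}. -/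
open Finset

/-- `e^{t_i + ⋯ + t_r}` in `ℚ[[t₁,…,t_r]]`. -/
noncomputable def Eexp (r : ℕ) (i : Fin r) : MvPowerSeries (Fin r) ℚ :=
  fun d => if ∀ j, j < i → d j = 0 then (∏ j, ((d j).factorial : ℚ))⁻¹ else 0

/-- `t_i + ⋯ + t_r` in `ℚ[[t₁,…,t_r]]`. -/
noncomputable def Ysum (r : ℕ) (i : Fin r) : MvPowerSeries (Fin r) ℚ :=
  ∑ j ∈ univ.filter (fun j => i ≤ j), MvPowerSeries.X j

/-!
Differentiating `B(y) (e^y - 1) = y`, where `B(y) = y / (e^y - 1)` is the Bernoulli generating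
function, gives `B'(y) (e^y - 1)² = (1 - y) e^y - 1`; so the factor in question is
`B'(y) = ∑ B_{n+1} yⁿ / n!`, evaluated at `y = t_i + ⋯ + t_r`. Substituting this linear form
into a power series is a ring homomorphism sending `yⁿ` to a homogeneous polynomial of degree
`n`, whose coefficient at `t^d` is the multinomial coefficient `n! / ∏ d_j!` when `d` is
supported on `{i, …, r}` and `0` otherwise. Hence the `i`-th factor has coefficient
`B_{|d|+1} / ∏ d_j!` at such `d`, and in the expansion of the product over `i` the exponent
`k` splits as `∑ ν_i`, the rows of an upper triangular array with column sums `k`.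
-/

namespace PowerSeries

theorem derivative_bernoulliPowerSeries_mul_exp_sub_one_sq (A : Type*) [CommRing A]
    [Algebra ℚ A] :
    d⁄dX A (bernoulliPowerSeries A) * (exp A - 1) ^ 2 = (1 - X) * exp A - 1 := by
  have h := bernoulliPowerSeries_mul_exp_sub_one A
  have hd := congrArg (d⁄dX A) h
  rw [Derivation.leibniz, map_sub, derivative_exp, Derivation.map_one_eq_zero, sub_zero,
    derivative_X, smul_eq_mul, smul_eq_mul] at hd
  linear_combination (exp A - 1) * hd - exp A * h

theorem coeff_derivative_bernoulliPowerSeries (n : ℕ) :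
    coeff n (d⁄dX ℚ (bernoulliPowerSeries ℚ)) = bernoulli (n + 1) / n.factorial := by
  rw [coeff_derivative, bernoulliPowerSeries, coeff_mk, Algebra.algebraMap_self,
    RingHom.id_apply, Nat.factorial_succ, Nat.cast_mul, Nat.cast_succ]
  field_simp

end PowerSeries

namespace MvPolynomial

variable {σ R : Type*} [CommRing R]

theorem IsHomogeneous.hasSubst_coe {p : MvPolynomial σ R} {n : ℕ} (hp : p.IsHomogeneous n)
    (hn : n ≠ 0) : PowerSeries.HasSubst (p : MvPowerSeries σ R) :=
  PowerSeries.HasSubst.of_constantCoeff_zero <| by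
    rw [← MvPowerSeries.coeff_zero_eq_constantCoeff_apply, coeff_coe]
    exact hp.coeff_eq_zero (by simpa using hn.symm)

theorem IsHomogeneous.coeff_subst_coe {p : MvPolynomial σ R} (hp : p.IsHomogeneous 1)
    (f : PowerSeries R) (e : σ →₀ ℕ) :
    MvPowerSeries.coeff e (PowerSeries.subst (p : MvPowerSeries σ R) f) =
      PowerSeries.coeff e.degree f * coeff e (p ^ e.degree) := by
  rw [PowerSeries.coeff_subst (hp.hasSubst_coe one_ne_zero), finsum_eq_single _ e.degree]
  · rw [← coe_pow, coeff_coe, smul_eq_mul]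
  · intro n hn
    rw [← coe_pow, coeff_coe, (hp.pow n).coeff_eq_zero (by simpa using Ne.symm hn), smul_zero]

end MvPolynomial

noncomputable def ysumPoly (r : ℕ) (i : Fin r) : MvPolynomial (Fin r) ℚ :=
  ∑ j ∈ univ.filter (fun j => i ≤ j), MvPolynomial.X j

theorem coe_ysumPoly (r : ℕ) (i : Fin r) :
    (ysumPoly r i : MvPowerSeries (Fin r) ℚ) = Ysum r i := by
  simp only [ysumPoly, Ysum, ← MvPolynomial.coe_X,
    ← MvPolynomial.coeToMvPowerSeries.ringHom_apply, map_sum]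

theorem isHomogeneous_ysumPoly (r : ℕ) (i : Fin r) : (ysumPoly r i).IsHomogeneous 1 :=
  .sum _ _ _ fun j _ => MvPolynomial.isHomogeneous_X ℚ j

theorem coeff_ysumPoly_pow_degree {r : ℕ} (i : Fin r) (d : Fin r →₀ ℕ) :
    MvPolynomial.coeff d (ysumPoly r i ^ d.degree) =
      if ∀ j, j < i → d j = 0 then
        (d.degree.factorial : ℚ) / ∏ j, ((d j).factorial : ℚ)
      else 0 := by
  have hlin : ysumPoly r i = ∑ j, (if i ≤ j then 1 else 0 : ℚ) • MvPolynomial.X j := by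
    simp [ysumPoly, sum_filter, ite_smul]
  have hweight : d.prod (fun j m => (if i ≤ j then 1 else 0 : ℚ) ^ m) =
      if ∀ j, j < i → d j = 0 then 1 else 0 := by
    rw [Finsupp.prod_fintype _ _ (by simp)]
    split_ifs with h
    · refine prod_eq_one fun j _ => ?_
      by_cases hij : i ≤ j
      · simp [hij]
      · simp [hij, h j (not_le.1 hij)]
    · push Not at h
      obtain ⟨j, hj, hdj⟩ := h
      exact prod_eq_zero (mem_univ j) (by simp [not_le.2 hj, hdj])
  rw [hlin, MvPolynomial.coeff_linearCombination_X_pow_of_fintype, if_pos (by rfl), hweight]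
  split_ifs
  · rw [mul_one, eq_div_iff (by positivity),
      ← Finsupp.multinomial_of_support_subset (subset_univ _), mul_comm]
    exact_mod_cast Finsupp.degree_eq_sum d ▸ Nat.multinomial_spec univ d
  · rw [mul_zero]

theorem hasSubst_Ysum (r : ℕ) (i : Fin r) : PowerSeries.HasSubst (Ysum r i) :=
  coe_ysumPoly r i ▸ (isHomogeneous_ysumPoly r i).hasSubst_coe one_ne_zero

theorem coeff_subst_Ysum {r : ℕ} (i : Fin r) (f : PowerSeries ℚ) (d : Fin r →₀ ℕ) :
    MvPowerSeries.coeff d (PowerSeries.subst (Ysum r i) f) =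
      if ∀ j, j < i → d j = 0 then
        PowerSeries.coeff d.degree f * d.degree.factorial / ∏ j, ((d j).factorial : ℚ)
      else 0 := by
  rw [← coe_ysumPoly, (isHomogeneous_ysumPoly r i).coeff_subst_coe, coeff_ysumPoly_pow_degree,
    mul_ite, mul_zero, mul_div_assoc]

theorem subst_Ysum_exp (r : ℕ) (i : Fin r) :
    PowerSeries.subst (Ysum r i) (PowerSeries.exp ℚ) = Eexp r i := by
  ext d
  rw [coeff_subst_Ysum, PowerSeries.coeff_exp]
  change _ = ite _ _ _
  rw [Algebra.algebraMap_self, RingHom.id_apply, one_div_mul_cancel (by positivity), one_div]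

noncomputable def bernoulliFactor (r : ℕ) (i : Fin r) : MvPowerSeries (Fin r) ℚ :=
  PowerSeries.subst (Ysum r i) (PowerSeries.derivative ℚ (bernoulliPowerSeries ℚ))

theorem coeff_bernoulliFactor {r : ℕ} (i : Fin r) (d : Fin r →₀ ℕ) :
    MvPowerSeries.coeff d (bernoulliFactor r i) =
      if ∀ j, j < i → d j = 0 then
        bernoulli (∑ j ∈ univ.filter (fun j => i ≤ j), d j + 1) /
          ∏ j ∈ univ.filter (fun j => i ≤ j), ((d j).factorial : ℚ)
      else 0 := by
  rw [bernoulliFactor, coeff_subst_Ysum, PowerSeries.coeff_derivative_bernoulliPowerSeries,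
    div_mul_cancel₀ _ (by positivity), Finsupp.degree_eq_sum]
  refine if_ctx_congr Iff.rfl (fun hd => ?_) fun _ => rfl
  have hbelow : ∀ j ∈ univ, ¬ i ≤ j → d j = 0 := fun j _ hj => hd j (not_le.1 hj)
  rw [sum_filter_of_ne fun j hj h => not_not.1 (mt (hbelow j hj) h),
    prod_filter_of_ne fun j hj h => not_not.1 (mt (fun hij => by rw [hbelow j hj hij]; rfl) h)]

theorem bernoulliFactor_mul_Eexp_sub_one_sq (r : ℕ) (i : Fin r) :
    bernoulliFactor r i * (Eexp r i - 1) ^ 2 = (1 - Ysum r i) * Eexp r i - 1 := by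
  have h := congrArg (PowerSeries.substAlgHom (hasSubst_Ysum r i))
    (PowerSeries.derivative_bernoulliPowerSeries_mul_exp_sub_one_sq ℚ)
  simp only [map_mul, map_sub, map_pow, map_one, PowerSeries.coe_substAlgHom,
    PowerSeries.subst_X (hasSubst_Ysum r i), subst_Ysum_exp] at h
  exact h

theorem constantCoeff_bernoulliFactor (r : ℕ) (i : Fin r) :
    MvPowerSeries.constantCoeff (bernoulliFactor r i) = -(1 / 2) := by
  simp [← MvPowerSeries.coeff_zero_eq_constantCoeff_apply, coeff_bernoulliFactor, bernoulli_one,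
    neg_div]

/-- `ν a i` is the exponent of `t_i` taken from the `a`-th factor of the product. -/
def triangularArrays {r : ℕ} (k : Fin r → ℕ) : Finset (Fin r → Fin r → ℕ) :=
  (Iic (fun _ i => k i : Fin r → Fin r → ℕ)).filter
    (fun ν => (∀ i, ∑ a ∈ univ.filter (fun a => a ≤ i), ν a i = k i) ∧
      ∀ a i, i < a → ν a i = 0)

theorem mem_triangularArrays {r : ℕ} {k : Fin r → ℕ} {ν : Fin r → Fin r → ℕ} :
    ν ∈ triangularArrays k ↔ (∀ i, ∑ a, ν a i = k i) ∧ ∀ a i, i < a → ν a i = 0 := by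
  have hcol (htri : ∀ a i, i < a → ν a i = 0) (i : Fin r) :
      ∑ a ∈ univ.filter (fun a => a ≤ i), ν a i = ∑ a, ν a i :=
    sum_filter_of_ne fun a _ h => not_lt.1 (mt (htri a i) h)
  simp only [triangularArrays, mem_filter, mem_Iic]
  constructor
  · rintro ⟨-, hsum, htri⟩
    exact ⟨fun i => hcol htri i ▸ hsum i, htri⟩
  · rintro ⟨hsum, htri⟩
    refine ⟨fun a i => ?_, fun i => (hcol htri i).trans (hsum i), htri⟩
    show ν a i ≤ k i
    rw [← hsum i]
    exact single_le_sum (f := fun b => ν b i) (fun _ _ => Nat.zero_le _) (mem_univ a)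

theorem coeff_prod_bernoulliFactor {r : ℕ} (k : Fin r → ℕ) :
    MvPowerSeries.coeff (Finsupp.equivFunOnFinite.symm k) (∏ i, bernoulliFactor r i) =
      ∑ ν ∈ triangularArrays k, ∏ i,
        bernoulli (∑ j ∈ univ.filter (fun j => i ≤ j), ν i j + 1) /
          ∏ j ∈ univ.filter (fun j => i ≤ j), ((ν i j).factorial : ℚ) := by
  rw [MvPowerSeries.coeff_prod, ← sum_filter_of_ne
    (p := fun l : Fin r →₀ (Fin r →₀ ℕ) => ∀ a j, j < a → l a j = 0) ?_]
  · refine sum_equiv (Finsupp.equivFunOnFinite.trans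
      (Equiv.piCongrRight fun _ => Finsupp.equivFunOnFinite)) (fun l => ?_) (fun l hl => ?_)
    · simp [mem_triangularArrays, mem_finsuppAntidiag, Finsupp.ext_iff, Finsupp.finsetSum_apply]
    · refine prod_congr rfl fun a _ => ?_
      rw [coeff_bernoulliFactor, if_pos ((mem_filter.1 hl).2 a)]
      rfl
  · intro l _ hne a j hj
    by_contra hlaj
    exact hne (prod_eq_zero (mem_univ a)
      (by rw [coeff_bernoulliFactor, if_neg fun h => hlaj (h j hj)]))

theorem stmt_13_general (r : ℕ) :
    ∃ F : Fin r → MvPowerSeries (Fin r) ℚ,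
      (∀ i, F i * (Eexp r i - 1) ^ 2 = (1 - Ysum r i) * Eexp r i - 1) ∧
      (∀ i, MvPowerSeries.constantCoeff (F i) = -(1 / 2)) ∧
      ∀ k : Fin r → ℕ,
        (-1 : ℚ) ^ (∑ i, k i) * (∏ i, ((k i).factorial : ℚ)) *
            MvPowerSeries.coeff (Finsupp.equivFunOnFinite.symm k) (∏ i, F i) =
          (-1 : ℚ) ^ (∑ i, k i) *
            ∑ ν ∈ (Finset.Iic (fun _ i => k i : Fin r → Fin r → ℕ)).filter
              (fun ν => (∀ i, ∑ a ∈ univ.filter (fun a => a ≤ i), ν a i = k i) ∧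
                ∀ a i, i < a → ν a i = 0),
              ∏ i,
                ((k i).factorial : ℚ) /
                    (∏ j ∈ univ.filter (fun j => i ≤ j), ((ν i j).factorial : ℚ)) *
                  bernoulli ((∑ j ∈ univ.filter (fun j => i ≤ j), ν i j) + 1) := by
  refine ⟨bernoulliFactor r, bernoulliFactor_mul_Eexp_sub_one_sq r,
    constantCoeff_bernoulliFactor r, fun k => ?_⟩
  rw [mul_assoc, coeff_prod_bernoulliFactor, mul_sum]
  congr 1
  refine sum_congr rfl fun ν _ => ?_
  rw [← prod_mul_distrib]
  refine prod_congr rfl fun i _ => ?_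
  ring

/-- The product `∏_{i=1}^r ((1 − t_i − ⋯ − t_r)e^{t_i+⋯+t_r} − 1)/((e^{t_i+⋯+t_r} − 1)²)`
is a well-defined formal power series: there are power series `F i` with
`F i · (e^{t_i+⋯+t_r} − 1)² = (1 − t_i − ⋯ − t_r)e^{t_i+⋯+t_r} − 1`, each with
constant term `−1/2`, and the coefficients of `∏ i, F i` are given by the
Furusho–Komori–Matsumoto–Tsumura Bernoulli-number formula. -/
theorem stmt_13 (r : ℕ) (hr : 1 ≤ r) :
    ∃ F : Fin r → MvPowerSeries (Fin r) ℚ,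
      (∀ i, F i * (Eexp r i - 1) ^ 2 = (1 - Ysum r i) * Eexp r i - 1) ∧
      (∀ i, MvPowerSeries.constantCoeff (F i) = -(1 / 2)) ∧
      ∀ k : Fin r → ℕ,
        (-1 : ℚ) ^ (∑ i, k i) * (∏ i, ((k i).factorial : ℚ)) *
            MvPowerSeries.coeff (Finsupp.equivFunOnFinite.symm k) (∏ i, F i) =
          (-1 : ℚ) ^ (∑ i, k i) *
            ∑ ν ∈ (Finset.Iic (fun _ i => k i : Fin r → Fin r → ℕ)).filter
              (fun ν => (∀ i, ∑ a ∈ univ.filter (fun a => a ≤ i), ν a i = k i) ∧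
                ∀ a i, i < a → ν a i = 0),
              ∏ i,
                ((k i).factorial : ℚ) /
                    (∏ j ∈ univ.filter (fun j => i ≤ j), ((ν i j).factorial : ℚ)) *
                  bernoulli ((∑ j ∈ univ.filter (fun j => i ≤ j), ν i j) + 1) :=
  stmt_13_general r
end

section
/- Let r ≥ 1, let γ_1,…,γ_r be positive reals, and let s_1,…,s_r be complex numbers satisfying Re(s_{r−k+1} + ⋯ + s_r) > k for every 1 ≤ k ≤ r. Then the multiple series ∑_{m_1,…,m_r ≥ 1} ∏_{k=1}^r (γ_1 m_1 + ⋯ + γ_k m_k)^{−s_k} converges absolutely. -/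
open Finset

/-!
Write σ_k = Re s_k. Since the finitely many strict inequalities Re(s_k + ⋯ + s_r) > r − k + 1
survive a small perturbation, there is c > 1 such that every tail sum of σ_k − c is nonnegative.
The partial sums W_k = γ_1 m_1 + ⋯ + γ_k m_k increase with k, so summation by parts shows
∏_k W_k^{-(σ_k - c)} ≤ b^{-∑(σ_k - c)} for any b ≤ min γ. Hence the k-th factor of the term is
essentially W_k^{-c} ≤ (γ_k m_k)^{-c}, and the multiple series is dominated by a product of
convergent one-variable series ∑_m m^{-c}.
-/

theorem mul_sum_le_sum_mul_of_tail_sum_nonneg {ι R : Type*} [LinearOrder ι] [CommRing R]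
    [LinearOrder R] [IsStrictOrderedRing R] {s : Finset ι} {f τ : ι → R} {x : R}
    (hf : MonotoneOn f s) (hx : ∀ i ∈ s, x ≤ f i)
    (hτ : ∀ i ∈ s, 0 ≤ ∑ j ∈ s with i ≤ j, τ j) :
    x * ∑ i ∈ s, τ i ≤ ∑ i ∈ s, τ i * f i := by
  classical
  induction s using Finset.induction_on_min generalizing x with
  | empty => simp
  | insert a s ha ih =>
    have has : a ∉ s := fun h => lt_irrefl a (ha a h)
    have hfa : ∀ i ∈ s, f a ≤ f i := fun i hi =>
      hf (mem_insert_self a s) (mem_insert_of_mem hi) (ha i hi).le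
    have htail : ∀ i ∈ s, 0 ≤ ∑ j ∈ s with i ≤ j, τ j := fun i hi => by
      have h := hτ i (mem_insert_of_mem hi)
      rwa [filter_insert, if_neg (ha i hi).not_ge] at h
    have hsum : 0 ≤ τ a + ∑ i ∈ s, τ i := by
      have h := hτ a (mem_insert_self a s)
      rwa [filter_true_of_mem fun j hj => ?_, sum_insert has] at h
      rcases mem_insert.1 hj with rfl | hj
      exacts [le_rfl, (ha j hj).le]
    rw [sum_insert has, sum_insert has]
    calc x * (τ a + ∑ i ∈ s, τ i) ≤ f a * (τ a + ∑ i ∈ s, τ i) :=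
          mul_le_mul_of_nonneg_right (hx a (mem_insert_self a s)) hsum
      _ = τ a * f a + f a * ∑ i ∈ s, τ i := by ring
      _ ≤ τ a * f a + ∑ i ∈ s, τ i * f i :=
          add_le_add_right (ih (hf.mono (subset_insert a s)) hfa htail) _

theorem prod_rpow_neg_le_rpow_neg_sum {ι : Type*} [LinearOrder ι] {s : Finset ι}
    {w τ : ι → ℝ} {b : ℝ} (hb : 0 < b) (hw : MonotoneOn w s) (hbw : ∀ i ∈ s, b ≤ w i)
    (hτ : ∀ i ∈ s, 0 ≤ ∑ j ∈ s with i ≤ j, τ j) :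
    ∏ i ∈ s, w i ^ (-τ i) ≤ b ^ (-∑ i ∈ s, τ i) := by
  have hw0 : ∀ i ∈ s, 0 < w i := fun i hi => hb.trans_le (hbw i hi)
  have hlog := mul_sum_le_sum_mul_of_tail_sum_nonneg (f := fun i => Real.log (w i))
    (fun i hi j hj hij => Real.log_le_log (hw0 i hi) (hw hi hj hij))
    (fun i hi => Real.log_le_log hb (hbw i hi)) hτ
  rw [Real.rpow_def_of_pos hb, prod_congr rfl fun i hi => Real.rpow_def_of_pos (hw0 i hi) _,
    ← Real.exp_sum, Real.exp_le_exp]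
  simp only [mul_neg, sum_neg_distrib, neg_le_neg_iff]
  simpa only [mul_comm] using hlog

theorem summable_pi_prod_of_nonneg {ι κ : Type*} [Fintype ι] {f : ι → κ → ℝ}
    (hf : ∀ i, Summable (f i)) (hf0 : ∀ i j, 0 ≤ f i j) :
    Summable fun m : ι → κ => ∏ i, f i (m i) := by
  classical
  refine summable_of_sum_le (c := ∏ i, ∑' j, f i j)
    (fun m => prod_nonneg fun i _ => hf0 i _) fun u => ?_
  calc ∑ m ∈ u, ∏ i, f i (m i)
      ≤ ∑ m ∈ Fintype.piFinset fun i => u.image (· i), ∏ i, f i (m i) :=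
        sum_le_sum_of_subset_of_nonneg
          (fun m hm => Fintype.mem_piFinset.2 fun i => mem_image_of_mem _ hm)
          fun m _ _ => prod_nonneg fun i _ => hf0 i _
    _ = ∏ i, ∑ j ∈ u.image (· i), f i j := (prod_univ_sum _ _).symm
    _ ≤ ∏ i, ∑' j, f i j :=
        prod_le_prod (fun i _ => sum_nonneg fun j _ => hf0 i j)
          fun i _ => (hf i).sum_le_tsum _ fun j _ => hf0 i j

open Filter Topology in
theorem exists_one_lt_forall_mul_lt {ι : Type*} [Finite ι] {a b : ι → ℝ}
    (h : ∀ i, a i < b i) : ∃ c, 1 < c ∧ ∀ i, a i * c < b i := by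
  have hnear : ∀ᶠ c in 𝓝[>] (1 : ℝ), ∀ i, a i * c < b i :=
    nhdsWithin_le_nhds <| eventually_all.2 fun i =>
      (continuous_const.mul continuous_id).continuousAt.eventually_lt continuousAt_const
        (by simpa using h i)
  exact (hnear.and self_mem_nhdsWithin).exists.imp fun c hc => ⟨hc.2, hc.1⟩

open Filter Topology in
theorem exists_pos_forall_le {ι : Type*} [Finite ι] {γ : ι → ℝ} (hγ : ∀ i, 0 < γ i) :
    ∃ b, 0 < b ∧ ∀ i, b ≤ γ i := by
  have hnear : ∀ᶠ b in 𝓝[>] (0 : ℝ), ∀ i, b ≤ γ i :=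
    nhdsWithin_le_nhds <| eventually_all.2 fun i => eventually_le_nhds (hγ i)
  exact (hnear.and self_mem_nhdsWithin).exists.imp fun b hb => ⟨hb.2, hb.1⟩

theorem norm_prod_cpow_neg_le {ι : Type*} [Fintype ι] [LinearOrder ι] {W u : ι → ℝ}
    {s : ι → ℂ} {b c : ℝ} (hb : 0 < b) (hc : 0 ≤ c) (hW : Monotone W) (hbu : ∀ i, b ≤ u i)
    (huW : ∀ i, u i ≤ W i) (hτ : ∀ i, 0 ≤ ∑ j with i ≤ j, ((s j).re - c)) :
    ‖∏ i, (W i : ℂ) ^ (-s i)‖ ≤ b ^ (-∑ i, ((s i).re - c)) * ∏ i, u i ^ (-c) := by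
  have hu0 : ∀ i, 0 < u i := fun i => hb.trans_le (hbu i)
  have hW0 : ∀ i, 0 < W i := fun i => (hu0 i).trans_le (huW i)
  calc ‖∏ i, (W i : ℂ) ^ (-s i)‖ = (∏ i, W i ^ (-((s i).re - c))) * ∏ i, W i ^ (-c) := by
        rw [norm_prod, ← prod_mul_distrib]
        refine prod_congr rfl fun i _ => ?_
        rw [Complex.norm_cpow_eq_rpow_re_of_pos (hW0 i), ← Real.rpow_add (hW0 i)]
        simp only [Complex.neg_re]
        ring_nf
    _ ≤ b ^ (-∑ i, ((s i).re - c)) * ∏ i, u i ^ (-c) :=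
        mul_le_mul
          (prod_rpow_neg_le_rpow_neg_sum hb (hW.monotoneOn _)
            (fun i _ => (hbu i).trans (huW i)) fun i _ => hτ i)
          (prod_le_prod (fun i _ => Real.rpow_nonneg (hW0 i).le _) fun i _ =>
            Real.rpow_le_rpow_of_nonpos (hu0 i) (huW i) (neg_nonpos.2 hc))
          (prod_nonneg fun i _ => Real.rpow_nonneg (hW0 i).le _) (Real.rpow_nonneg hb.le _)

theorem summable_mul_nat_add_one_rpow_neg {a c : ℝ} (ha : 0 ≤ a) (hc : 1 < c) :
    Summable fun n : ℕ => (a * ((n : ℝ) + 1)) ^ (-c) := by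
  have hshift : Summable fun n : ℕ => ((n : ℝ) + 1) ^ (-c) := by
    simpa using (summable_nat_add_iff 1).2 (Real.summable_nat_rpow.2 (neg_lt_neg hc))
  exact (hshift.mul_left (a ^ (-c))).congr fun n => (Real.mul_rpow ha (by positivity)).symm

theorem stmt_18_general (r : ℕ) (γ : Fin r → ℝ) (hγ : ∀ j, 0 < γ j)
    (s : Fin r → ℂ)
    (hs : ∀ k ∈ Finset.Icc 1 r, (k : ℝ) <
      (∑ j ∈ univ.filter (fun j : Fin r => r - k ≤ (j : ℕ)), s j).re) :
    Summable (fun m : Fin r → ℕ =>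
      ‖∏ k : Fin r,
        ((∑ j ∈ univ.filter (fun j => j ≤ k), γ j * ((m j : ℝ) + 1) : ℝ) : ℂ) ^ (-(s k))‖) := by
  have htail : ∀ i : Fin r, ((r - i : ℕ) : ℝ) < ∑ j with i ≤ j, (s j).re := fun i => by
    have h := hs (r - i) (mem_Icc.2 ⟨by omega, by omega⟩)
    rwa [Nat.sub_sub_self i.is_le', Complex.re_sum] at h
  obtain ⟨c, hc, hcs⟩ := exists_one_lt_forall_mul_lt htail
  obtain ⟨b, hb, hbγ⟩ := exists_pos_forall_le hγ
  have hτ : ∀ i : Fin r, 0 ≤ ∑ j with i ≤ j, ((s j).re - c) := fun i => by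
    have hcard : #{j | i ≤ j} = r - i := by rw [filter_le_eq_Ici, Fin.card_Ici]
    rw [sum_sub_distrib, sum_const, hcard, nsmul_eq_mul]
    linarith [hcs i]
  refine Summable.of_nonneg_of_le (fun m => norm_nonneg _) (fun m => norm_prod_cpow_neg_le hb
    (by linarith) (u := fun k => γ k * ((m k : ℝ) + 1)) ?mono ?lower ?upper hτ)
    ((summable_pi_prod_of_nonneg (fun k => summable_mul_nat_add_one_rpow_neg (hγ k).le hc)
      fun k n => ?nonneg).mul_left _)
  case mono =>
    exact fun k l hkl => sum_le_sum_of_subset_of_nonneg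
      (monotone_filter_right _ fun j _ (hj : j ≤ k) => hj.trans hkl)
      fun j _ _ => mul_nonneg (hγ j).le (by positivity)
  case lower => exact fun k => (hbγ k).trans (le_mul_of_one_le_right (hγ k).le (by simp))
  case upper =>
    exact fun k => single_le_sum (f := fun j => γ j * ((m j : ℝ) + 1))
      (fun j _ => mul_nonneg (hγ j).le (by positivity)) (by simp)
  case nonneg => exact Real.rpow_nonneg (mul_nonneg (hγ k).le (by positivity)) _

theorem stmt_18 (r : ℕ) (hr : 1 ≤ r) (γ : Fin r → ℝ) (hγ : ∀ j, 0 < γ j)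
    (s : Fin r → ℂ)
    (hs : ∀ k ∈ Finset.Icc 1 r, (k : ℝ) <
      (∑ j ∈ univ.filter (fun j : Fin r => r - k ≤ (j : ℕ)), s j).re) :
    Summable (fun m : Fin r → ℕ =>
      ‖∏ k : Fin r,
        ((∑ j ∈ univ.filter (fun j => j ≤ k), γ j * ((m j : ℝ) + 1) : ℝ) : ℂ) ^ (-(s k))‖) :=
  stmt_18_general r γ hγ s hs
end
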